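/- arXiv:2204.02131 — 7 statements merged into one kernel-verified Lean document; each statement's English description precedes it below -/
import Mathlib

section
/- Let σ be a generator of Γ = Gal(E/F). If a ∈ N_n(E) satisfies the norm-one condition a · σ(a) · σ²(a) · ⋯ · σ^{l-1}(a) = 1 (the identity matrix), then there exists b ∈ N_n(E) such that a = b · σ(b)^{-1}. (In other words, the first nonabelian Galois cohomology H¹(Γ, N_n(E)) is trivial.) -/
/-
The twisted norms `N k = a · σ(a) ⋯ σ^{k-1}(a)` satisfy `N (k+1) = a · σ(N k)`, and the norm-one
condition says `N l = 1 = N 0`. Averaging them against the conjugates of an element `μ` of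
trace one, as in the additive proof of Hilbert 90, gives `b = Σ_{i<l} σ^i(μ) N i` with
`a · σ(b) = b` by telescoping. Each `N i` is unipotent upper triangular and the weights `σ^i(μ)`
sum to `1`, so `b` is again unipotent upper triangular; in particular `σ(b)` is invertible.
-/

/-- `N_n(E)`: the group of `n × n` unipotent upper triangular matrices, i.e. upper
triangular matrices whose diagonal entries are all `1`. -/
def IsUnipotentUpperTriangular {E : Type*} [Field E] {n : ℕ}
    (a : Matrix (Fin n) (Fin n) E) : Prop :=
  (∀ i, a i i = 1) ∧ ∀ i j : Fin n, j < i → a i j = 0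

open Finset

namespace IsUnipotentUpperTriangular

variable {E : Type*} [Field E] {n : ℕ} {A B : Matrix (Fin n) (Fin n) E}

theorem one : IsUnipotentUpperTriangular (1 : Matrix (Fin n) (Fin n) E) :=
  ⟨fun _ => Matrix.one_apply_eq _, fun _ _ h => Matrix.one_apply_ne h.ne'⟩

theorem mul (hA : IsUnipotentUpperTriangular A) (hB : IsUnipotentUpperTriangular B) :
    IsUnipotentUpperTriangular (A * B) := by
  refine ⟨fun i => ?_, fun i j hji => ?_⟩
  · rw [Matrix.mul_apply, sum_eq_single i, hA.1, hB.1, one_mul]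
    · intro k _ hk
      rcases lt_or_gt_of_ne hk with h | h
      · rw [hA.2 i k h, zero_mul]
      · rw [hB.2 k i h, mul_zero]
    · exact fun h => absurd (mem_univ i) h
  · rw [Matrix.mul_apply]
    refine sum_eq_zero fun k _ => ?_
    rcases lt_or_ge k i with h | h
    · rw [hA.2 i k h, zero_mul]
    · rw [hB.2 k j (hji.trans_le h), mul_zero]

theorem map {E' : Type*} [Field E'] (hA : IsUnipotentUpperTriangular A) (f : E →+* E') :
    IsUnipotentUpperTriangular (A.map f) :=
  ⟨fun i => by rw [Matrix.map_apply, hA.1 i, map_one],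
    fun i j h => by rw [Matrix.map_apply, hA.2 i j h, map_zero]⟩

theorem sum_smul_of_sum_eq_one {ι : Type*} {s : Finset ι} {w : ι → E} {C : ι → Matrix (Fin n) (Fin n) E}
    (hw : ∑ i ∈ s, w i = 1) (hC : ∀ i ∈ s, IsUnipotentUpperTriangular (C i)) :
    IsUnipotentUpperTriangular (∑ i ∈ s, w i • C i) := by
  refine ⟨fun k => ?_, fun k m h => ?_⟩
  · rw [Matrix.sum_apply, ← hw]
    exact sum_congr rfl fun i hi => by rw [Matrix.smul_apply, (hC i hi).1, smul_eq_mul, mul_one]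
  · rw [Matrix.sum_apply]
    exact sum_eq_zero fun i hi => by rw [Matrix.smul_apply, (hC i hi).2 k m h, smul_zero]

theorem det_eq_one (hA : IsUnipotentUpperTriangular A) : A.det = 1 := by
  rw [Matrix.det_of_isUpperTriangular hA.2]
  exact prod_eq_one fun i _ => hA.1 i

theorem eq_mul_inv_of_mul_eq {C : Matrix (Fin n) (Fin n) E} (hB : IsUnipotentUpperTriangular B)
    (h : A * B = C) : A = C * B⁻¹ := by
  rw [← h, Matrix.mul_nonsing_inv_cancel_right _ _ (by rw [hB.det_eq_one]; exact isUnit_one)]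

end IsUnipotentUpperTriangular

section TwistedNorm

variable {R : Type*} [CommRing R] {ι : Type*} [Fintype ι] [DecidableEq ι]
  (s : R →+* R) (a : Matrix ι ι R)

def twistedNorm (k : ℕ) : Matrix ι ι R :=
  ((List.range k).map fun i => a.map ⇑(s ^ i)).prod

@[simp]
theorem twistedNorm_zero : twistedNorm s a 0 = 1 := rfl

theorem twistedNorm_succ (k : ℕ) : twistedNorm s a (k + 1) = a * (twistedNorm s a k).map s := by
  rw [twistedNorm, List.range_succ_eq_map, List.map_cons, List.prod_cons, pow_zero,
    RingHom.coe_one, Matrix.map_id, twistedNorm, ← RingHom.mapMatrix_apply, map_list_prod,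
    List.map_map, List.map_map]
  congr 3
  ext i : 1
  simp only [Function.comp_apply, RingHom.mapMatrix_apply, Matrix.map_map, pow_succ',
    RingHom.coe_mul]

def hilbert90Sum (μ : R) (l : ℕ) : Matrix ι ι R :=
  ∑ i ∈ range l, (s ^ i) μ • twistedNorm s a i

theorem mul_map_hilbert90Sum {μ : R} {l : ℕ} (hμ : (s ^ l) μ = μ) (hN : twistedNorm s a l = 1) :
    a * (hilbert90Sum s a μ l).map s = hilbert90Sum s a μ l := by
  set f : ℕ → Matrix ι ι R := fun i => (s ^ i) μ • twistedNorm s a i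
  have hstep (i : ℕ) : a * (f i).map s = f (i + 1) := by
    simp only [f]
    rw [twistedNorm_succ, Matrix.map_smul' _ _ _ (map_mul s), mul_smul_comm, pow_succ',
      RingHom.coe_mul, Function.comp_apply]
  have hperiodic : f l = f 0 := by
    simp only [f, hμ, hN, pow_zero, RingHom.coe_one, id_eq, twistedNorm_zero]
  rw [hilbert90Sum, ← RingHom.mapMatrix_apply, map_sum, mul_sum]
  simp only [RingHom.mapMatrix_apply]
  rw [sum_congr rfl fun i _ => hstep i]
  apply add_right_cancel (b := f 0)
  rw [← sum_range_succ' f, sum_range_succ, hperiodic]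

end TwistedNorm

theorem IsUnipotentUpperTriangular.twistedNorm {E : Type*} [Field E] {n : ℕ}
    {a : Matrix (Fin n) (Fin n) E} (ha : IsUnipotentUpperTriangular a) (s : E →+* E) (k : ℕ) :
    IsUnipotentUpperTriangular (twistedNorm s a k) := by
  induction k with
  | zero => exact one
  | succ k ih => rw [twistedNorm_succ]; exact ha.mul (ih.map s)

theorem trace_eq_sum_pow_of_forall_mem_zpowers {F E : Type*} [Field F] [Field E] [Algebra F E]
    [FiniteDimensional F E] [IsGalois F E] {σ : E ≃ₐ[F] E}
    (hσ : ∀ τ : E ≃ₐ[F] E, τ ∈ Subgroup.zpowers σ) (x : E) :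
    algebraMap F E (Algebra.trace F E x) = ∑ i ∈ range (Module.finrank F E), (σ ^ i) x := by
  classical
  rw [trace_eq_sum_automorphisms, ← IsCyclic.image_range_orderOf hσ,
    sum_image (by rw [coe_range]; exact pow_injOn_Iio_orderOf),
    orderOf_eq_card_of_forall_mem_zpowers hσ, IsGalois.card_aut_eq_finrank]

/-- Hilbert 90 for the unipotent upper triangular group: if `σ` generates
`Γ = Gal(E/F)` (cyclic of prime order `l`) and `a ∈ N_n(E)` satisfies the norm-one
condition `a · σ(a) · σ²(a) ⋯ σ^{l-1}(a) = 1`, then `a = b · σ(b)⁻¹` for some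
`b ∈ N_n(E)`; i.e. `H¹(Γ, N_n(E))` is trivial. -/
theorem h1_unipotent_trivial
    (F E : Type*) [Field F] [Field E] [Algebra F E] [IsGalois F E]
    (l : ℕ) (hl : l.Prime) (hrank : Module.finrank F E = l)
    (σ : E ≃ₐ[F] E) (hσ : ∀ τ : E ≃ₐ[F] E, τ ∈ Subgroup.zpowers σ)
    (n : ℕ) (a : Matrix (Fin n) (Fin n) E)
    (ha : IsUnipotentUpperTriangular a)
    (hnorm : ((List.range l).map fun i => a.map ⇑(σ ^ i)).prod = 1) :
    ∃ b : Matrix (Fin n) (Fin n) E, IsUnipotentUpperTriangular b ∧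
      a = b * (b.map ⇑σ)⁻¹ := by
  have : FiniteDimensional F E := Module.finite_of_finrank_pos (hrank ▸ hl.pos)
  set s : E →+* E := σ.toRingHom
  have hs (i : ℕ) : ⇑(s ^ i) = ⇑(σ ^ i) := by rw [RingHom.coe_pow, AlgEquiv.coe_pow]; rfl
  have hperiodic : twistedNorm s a l = 1 := by simpa only [twistedNorm, hs] using hnorm
  obtain ⟨μ, hμ⟩ := Algebra.trace_surjective F E 1
  have hμl : (s ^ l) μ = μ := by
    rw [hs, ← hrank, ← IsGalois.card_aut_eq_finrank, pow_card_eq_one', AlgEquiv.one_apply]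
  have hweights : ∑ i ∈ range l, (s ^ i) μ = 1 := by
    simp only [hs]
    rw [← hrank, ← trace_eq_sum_pow_of_forall_mem_zpowers hσ, hμ, map_one]
  have hb : IsUnipotentUpperTriangular (hilbert90Sum s a μ l) :=
    IsUnipotentUpperTriangular.sum_smul_of_sum_eq_one hweights fun i _ => ha.twistedNorm s i
  exact ⟨_, hb, (hb.map s).eq_mul_inv_of_mul_eq (mul_map_hilbert90Sum s a hμl hperiodic)⟩
end

section
/- Suppose the action of γ on X is free, i.e., γ(x) ≠ x for every x ∈ X. Then there exists an open subset U ⊆ X such that X is the disjoint union of the sets U, γ(U), γ²(U), ..., γ^{l-1}(U); that is, U is an open fundamental domain for the action of the cyclic group generated by γ. -/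
/-!
Since `l` is prime and `γ` has no fixed points, no point is fixed by `γ^d` for `0 < d < l`.
Hausdorff separation and a basis of clopen sets then give every point a clopen neighbourhood
`V` disjoint from its translates `γ^d(V)`, `0 < d < l`, and by the Lindelöf property countably
many such sets `W₀, W₁, …` cover `X`. The union over `n` of `Wₙ` minus the orbits of
`W₀, …, Wₙ₋₁` meets every orbit, is disjoint from its nontrivial translates, and is open
because the orbit of a clopen set is a finite union of clopen sets.
-/

open Set Filter Topology Function TopologicalSpace

section Saturation

variable {X : Type*} {f : X → X} {l : ℕ}

def iterSaturation (f : X → X) (l : ℕ) (A : Set X) : Set X :=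
  ⋃ i ∈ Finset.range l, f^[i] '' A

def DisjointFromIterates (f : X → X) (l : ℕ) (A : Set X) : Prop :=
  ∀ d, 0 < d → d < l → Disjoint A (f^[d] '' A)

theorem subset_iterSaturation (hl : 0 < l) (A : Set X) : A ⊆ iterSaturation f l A :=
  fun x hx => mem_biUnion (Finset.mem_range.2 hl) ⟨x, hx, rfl⟩

theorem mem_iterSaturation {A : Set X} {x : X} :
    x ∈ iterSaturation f l A ↔ ∃ i < l, ∃ a ∈ A, f^[i] a = x := by
  simp [iterSaturation]

theorem iterate_mem_iterSaturation (hf : ∀ x, f^[l] x = x) {A : Set X} {x : X}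
    (hx : x ∈ iterSaturation f l A) (k : ℕ) : f^[k] x ∈ iterSaturation f l A := by
  obtain ⟨i, hi, a, ha, rfl⟩ := mem_iterSaturation.1 hx
  refine mem_iterSaturation.2 ⟨(k + i) % l, Nat.mod_lt _ (by omega), a, ha, ?_⟩
  rw [IsPeriodicPt.iterate_mod_apply (hf a), iterate_add_apply]

theorem Function.Injective.disjoint_iterate_image (hinj : Injective f) {A : Set X}
    (hA : DisjointFromIterates f l A) {i j : ℕ} (hi : i < l) (hj : j < l) (hij : i ≠ j) :
    Disjoint (f^[i] '' A) (f^[j] '' A) := by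
  wlog hlt : i < j generalizing i j
  · exact (this hj hi hij.symm (by omega)).symm
  obtain ⟨d, rfl⟩ : ∃ d, j = i + d := ⟨j - i, by omega⟩
  rw [iterate_add, image_comp, disjoint_image_iff (hinj.iterate i)]
  exact hA d (by omega) (by omega)

def fundamentalDomainOfCover (f : X → X) (l : ℕ) (W : ℕ → Set X) : Set X :=
  ⋃ n, W n \ ⋃ m ∈ Finset.range n, iterSaturation f l (W m)

variable {W : ℕ → Set X}

theorem mem_fundamentalDomainOfCover {x : X} :
    x ∈ fundamentalDomainOfCover f l W ↔
      ∃ n, x ∈ W n ∧ ∀ m < n, x ∉ iterSaturation f l (W m) := by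
  simp [fundamentalDomainOfCover]

theorem iterSaturation_fundamentalDomainOfCover (hf : ∀ x, f^[l] x = x) (hl : 0 < l)
    (hW : ⋃ n, W n = univ) : iterSaturation f l (fundamentalDomainOfCover f l W) = univ := by
  classical
  refine eq_univ_of_forall fun x => ?_
  have hex : ∃ n, x ∈ iterSaturation f l (W n) := by
    obtain ⟨n, hn⟩ := mem_iUnion.1 (hW ▸ mem_univ x)
    exact ⟨n, subset_iterSaturation hl _ hn⟩
  obtain ⟨i, hi, a, ha, hax⟩ := mem_iterSaturation.1 (Nat.find_spec hex)
  have ha_first : ∀ m < Nat.find hex, a ∉ iterSaturation f l (W m) := fun m hm ham =>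
    Nat.find_min hex hm (hax ▸ iterate_mem_iterSaturation hf ham i)
  exact mem_iterSaturation.2
    ⟨i, hi, a, mem_fundamentalDomainOfCover.2 ⟨_, ha, ha_first⟩, hax⟩

theorem disjointFromIterates_fundamentalDomainOfCover (hf : ∀ x, f^[l] x = x)
    (hW : ∀ n, DisjointFromIterates f l (W n)) :
    DisjointFromIterates f l (fundamentalDomainOfCover f l W) := by
  intro d hd hdl
  rw [disjoint_left]
  rintro u hu ⟨v, hv, hvu⟩
  obtain ⟨n, hun, hu_first⟩ := mem_fundamentalDomainOfCover.1 hu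
  obtain ⟨m, hvm, hv_first⟩ := mem_fundamentalDomainOfCover.1 hv
  rcases lt_trichotomy m n with hmn | rfl | hnm
  · exact hu_first m hmn
      (hvu ▸ iterate_mem_iterSaturation hf (subset_iterSaturation (by omega) _ hvm) d)
  · exact disjoint_left.1 (hW m d hd hdl) hun ⟨v, hvm, hvu⟩
  · have huv : f^[l - d] u = v := by
      rw [← hvu, ← iterate_add_apply, Nat.sub_add_cancel hdl.le, hf]
    exact hv_first n hnm
      (huv ▸ iterate_mem_iterSaturation hf (subset_iterSaturation (by omega) _ hun) (l - d))

theorem isOpen_fundamentalDomainOfCover [TopologicalSpace X] (hWo : ∀ n, IsOpen (W n))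
    (hWc : ∀ n, IsClosed (iterSaturation f l (W n))) :
    IsOpen (fundamentalDomainOfCover f l W) :=
  isOpen_iUnion fun n => (hWo n).sdiff (isClosed_biUnion_finset fun m _ => hWc m)

end Saturation

section Topology

variable {X : Type*} [TopologicalSpace X]

theorem Homeomorph.isClopen_iterate_image (γ : X ≃ₜ X) {A : Set X} (hA : IsClopen A) :
    ∀ i, IsClopen ((⇑γ)^[i] '' A)
  | 0 => by simpa using hA
  | i + 1 => by
    rw [iterate_succ', image_comp]
    have hi := γ.isClopen_iterate_image hA i
    exact ⟨γ.isClosed_image.2 hi.1, γ.isOpen_image.2 hi.2⟩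

theorem Homeomorph.isClopen_iterSaturation (γ : X ≃ₜ X) (l : ℕ) {A : Set X}
    (hA : IsClopen A) : IsClopen (iterSaturation γ l A) :=
  isClopen_biUnion_finset fun i _ => γ.isClopen_iterate_image hA i

theorem eventually_smallSets_disjoint_image [T2Space X] {g : X → X} {x : X}
    (hg : ContinuousAt g x) (hx : g x ≠ x) : ∀ᶠ V in (𝓝 x).smallSets, Disjoint V (g '' V) := by
  obtain ⟨u, v, hu, hv, hgu, hxv, huv⟩ := t2_separation hx
  refine eventually_smallSets.2 ⟨v ∩ g ⁻¹' u,
    inter_mem (hv.mem_nhds hxv) (hg.preimage_mem_nhds (hu.mem_nhds hgu)), fun V hV => ?_⟩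
  exact huv.symm.mono (hV.trans inter_subset_left)
    ((image_mono (hV.trans inter_subset_right)).trans (image_preimage_subset g u))

theorem exists_isClopen_disjointFromIterates [T2Space X]
    (hB : IsTopologicalBasis {s : Set X | IsClopen s}) {f : X → X} (hf : Continuous f)
    {l : ℕ} {x : X} (hx : ∀ d, 0 < d → d < l → f^[d] x ≠ x) :
    ∃ V, IsClopen V ∧ x ∈ V ∧ DisjointFromIterates f l V := by
  have hsmall : ∀ᶠ V in (𝓝 x).smallSets, ∀ d ∈ Finset.Ioo 0 l, Disjoint V (f^[d] '' V) :=
    (eventually_all_finset _).2 fun d hd =>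
      eventually_smallSets_disjoint_image (hf.iterate d).continuousAt
        (hx d (Finset.mem_Ioo.1 hd).1 (Finset.mem_Ioo.1 hd).2)
  obtain ⟨t, ht, hsub⟩ := eventually_smallSets.1 hsmall
  obtain ⟨V, hV, hxV, hVt⟩ := hB.mem_nhds_iff.1 ht
  exact ⟨V, hV, hxV, fun d hd hdl => hsub V hVt d (Finset.mem_Ioo.2 ⟨hd, hdl⟩)⟩

theorem exists_seq_isOpen_cover [LindelofSpace X] {P : Set X → Prop} (h_empty : P ∅)
    (h : ∀ x, ∃ V, IsOpen V ∧ x ∈ V ∧ P V) :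
    ∃ W : ℕ → Set X, (∀ n, IsOpen (W n) ∧ P (W n)) ∧ ⋃ n, W n = univ := by
  have : Nonempty {V : Set X // IsOpen V ∧ P V} := ⟨⟨∅, isOpen_empty, h_empty⟩⟩
  obtain ⟨g, hg⟩ := isLindelof_univ.indexed_countable_subcover
    (fun V : {V : Set X // IsOpen V ∧ P V} => V.1) (fun V => V.2.1) fun x _ => by
      obtain ⟨V, hV, hxV, hPV⟩ := h x
      exact mem_iUnion.2 ⟨⟨V, hV, hPV⟩, hxV⟩
  exact ⟨fun n => (g n).1, fun n => (g n).2, univ_subset_iff.1 hg⟩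

end Topology

theorem Function.iterate_ne_self_of_lt_prime {X : Type*} {f : X → X} {p : ℕ} (hp : p.Prime)
    {x : X} (hper : f^[p] x = x) (hfix : f x ≠ x) {d : ℕ} (hd : 0 < d) (hdp : d < p) :
    f^[d] x ≠ x := by
  have := Fact.mk hp
  exact not_isPeriodicPt_of_pos_of_lt_minimalPeriod hd.ne'
    (minimalPeriod_eq_prime hper hfix ▸ hdp)

/-- If `γ` is a homeomorphism of order dividing the prime `l` of a locally compact,
Hausdorff, totally disconnected, second countable space `X`, and the action of `γ` is
free (`γ x ≠ x` for all `x`), then there is an open fundamental domain `U`: the sets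
`U, γ(U), γ²(U), …, γ^{l-1}(U)` are pairwise disjoint and cover `X`. -/
theorem exists_open_fundamental_domain
    (l : ℕ) (hl : l.Prime)
    (X : Type*) [TopologicalSpace X] [LocallyCompactSpace X] [T2Space X]
    [TotallyDisconnectedSpace X] [SecondCountableTopology X]
    (γ : X ≃ₜ X) (hγl : ∀ x, (⇑γ)^[l] x = x)
    (hfree : ∀ x : X, γ x ≠ x) :
    ∃ U : Set X, IsOpen U ∧
      (⋃ i ∈ Finset.range l, (⇑γ)^[i] '' U) = Set.univ ∧
      ∀ i j : ℕ, i < l → j < l → i ≠ j →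
        Disjoint ((⇑γ)^[i] '' U) ((⇑γ)^[j] '' U) := by
  obtain ⟨W, hW, hcover⟩ :=
    exists_seq_isOpen_cover (P := fun V => IsClopen V ∧ DisjointFromIterates γ l V)
      ⟨isClopen_empty, fun d _ _ => by simp⟩ fun x => by
        obtain ⟨V, hV, hxV, hVd⟩ := exists_isClopen_disjointFromIterates
          (loc_compact_Haus_tot_disc_of_zero_dim (H := X)) γ.continuous
          fun d hd hdl => iterate_ne_self_of_lt_prime hl (hγl x) (hfree x) hd hdl
        exact ⟨V, hV.2, hxV, hV, hVd⟩
  have hU := disjointFromIterates_fundamentalDomainOfCover hγl fun n => (hW n).2.2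
  refine ⟨fundamentalDomainOfCover γ l W,
    isOpen_fundamentalDomainOfCover (fun n => (hW n).1)
      fun n => (γ.isClopen_iterSaturation l (hW n).2.1).1,
    iterSaturation_fundamentalDomainOfCover hγl hl.pos hcover,
    fun i j hi hj hij => γ.injective.disjoint_iterate_image hU hi hj hij⟩
end

section
/- Every locally constant, compactly supported k-valued function on Y extends to a locally constant, compactly supported k-valued function on X. That is, if h : Y → k is locally constant with compact support, then there exists a locally constant, compactly supported f : X → k with f(y) = h(y) for all y ∈ Y. (Equivalently, the restriction map C_c^∞(X, k) → C_c^∞(Y, k) is surjective.) -/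
/-!
On `Y` the function `h` takes finitely many values, and for each value `c ≠ 0` the fibre
`h ⁻¹' {c}` is a compact clopen subset of `Y`. Since `Y` is closed, a compact clopen subset of
`Y` is cut out on `Y` by a compact clopen subset `V c` of `X`. Then `∑ c, c • 𝟙_{V c}` extends
`h`: the sets `V c` may overlap, but only off `Y`, since `V c ∩ Y` is the fibre over `c`.
-/

open Set

section LocallyCompactTotallyDisconnected

variable {X : Type*} [TopologicalSpace X] [LocallyCompactSpace X] [T2Space X]
  [TotallyDisconnectedSpace X]

theorem IsCompact.exists_isClopen_isCompact_between {K U : Set X} (hK : IsCompact K)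
    (hU : IsOpen U) (hKU : K ⊆ U) :
    ∃ V, IsClopen V ∧ IsCompact V ∧ K ⊆ V ∧ V ⊆ U := by
  obtain ⟨L, hL, hKL, hLU⟩ := exists_compact_between hK hU hKU
  have hnhds : ∀ x ∈ K, ∃ W, IsClopen W ∧ x ∈ W ∧ W ⊆ interior L := fun x hx =>
    loc_compact_Haus_tot_disc_of_zero_dim.mem_nhds_iff.1 (isOpen_interior.mem_nhds (hKL hx))
  choose! W hWclopen hxW hWL using hnhds
  obtain ⟨t, htK, hKt⟩ :=
    hK.elim_nhds_subcover W fun x hx => (hWclopen x hx).isOpen.mem_nhds (hxW x hx)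
  have hclopen : IsClopen (⋃ x ∈ t, W x) :=
    t.finite_toSet.isClopen_biUnion fun x hx => hWclopen x (htK x hx)
  have hsubL : (⋃ x ∈ t, W x) ⊆ interior L :=
    iUnion₂_subset fun x hx => hWL x (htK x hx)
  exact ⟨_, hclopen, hL.of_isClosed_subset hclopen.isClosed (hsubL.trans interior_subset), hKt,
    hsubL.trans (interior_subset.trans hLU)⟩

theorem IsClosed.exists_isClopen_isCompact_preimage_val_eq {Y : Set X} (hY : IsClosed Y)
    {C : Set Y} (hC : IsClopen C) (hCc : IsCompact C) :
    ∃ V : Set X, IsClopen V ∧ IsCompact V ∧ Subtype.val ⁻¹' V = C := by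
  have hcompl : IsClosed (Subtype.val '' Cᶜ) := hY.isClosedMap_subtype_val _ hC.compl.isClosed
  have hsep : Subtype.val '' C ⊆ (Subtype.val '' Cᶜ)ᶜ := by
    rintro _ ⟨y, hy, rfl⟩ ⟨z, hz, hzy⟩
    exact hz (Subtype.val_injective hzy ▸ hy)
  obtain ⟨V, hV, hVc, hCV, hVsub⟩ :=
    (hCc.image continuous_subtype_val).exists_isClopen_isCompact_between hcompl.isOpen_compl hsep
  refine ⟨V, hV, hVc, Subset.antisymm (fun y hy => ?_) (image_subset_iff.1 hCV)⟩
  by_contra hyC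
  exact hVsub hy ⟨y, hyC, rfl⟩

end LocallyCompactTotallyDisconnected

theorem IsLocallyConstant.finset_sum {ι X M : Type*} [TopologicalSpace X] [AddCommMonoid M]
    {s : Finset ι} {f : ι → X → M} (hf : ∀ i ∈ s, IsLocallyConstant (f i)) :
    IsLocallyConstant (∑ i ∈ s, f i) := by
  classical
  induction s using Finset.induction_on with
  | empty => exact IsLocallyConstant.const 0
  | insert i s hi ih =>
    rw [Finset.sum_insert hi]
    exact (hf i (s.mem_insert_self i)).add (ih fun j hj => hf j (Finset.mem_insert_of_mem hj))

theorem IsLocallyConstant.finite_range_of_hasCompactSupport {X M : Type*} [TopologicalSpace X]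
    [Zero M] {h : X → M} (hlc : IsLocallyConstant h) (hcs : HasCompactSupport h) :
    (range h).Finite := by
  have : CompactSpace (tsupport h) := isCompact_iff_compactSpace.1 hcs
  have hfin : (range fun x : tsupport h => h x).Finite :=
    (hlc.comp_continuous continuous_subtype_val).range_finite
  refine (hfin.insert 0).subset ?_
  rintro _ ⟨x, rfl⟩
  by_cases hx : h x = 0
  · exact Or.inl hx
  · exact Or.inr ⟨⟨x, subset_tsupport h hx⟩, rfl⟩

theorem IsLocallyConstant.isCompact_fiber_of_hasCompactSupport {X M : Type*} [TopologicalSpace X]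
    [Zero M] {h : X → M} (hlc : IsLocallyConstant h) (hcs : HasCompactSupport h) {c : M}
    (hc : c ≠ 0) : IsCompact (h ⁻¹' {c}) :=
  hcs.of_isClosed_subset (hlc.isClosed_fiber c)
    fun x hx => subset_tsupport h (by rw [Function.mem_support, mem_preimage.1 hx]; exact hc)

/-- Every locally constant, compactly supported `k`-valued function on a closed subset
`Y` of a locally compact, Hausdorff, totally disconnected space `X` extends to a
locally constant, compactly supported function on `X`; i.e. the restriction map
`C_c^∞(X, k) → C_c^∞(Y, k)` is surjective. -/
theorem extend_locallyConstant_compactSupport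
    (X : Type*) [TopologicalSpace X] [LocallyCompactSpace X] [T2Space X]
    [TotallyDisconnectedSpace X]
    (Y : Set X) (hY : IsClosed Y)
    (k : Type*) [Field k]
    (h : Y → k) (hlc : IsLocallyConstant h) (hcs : HasCompactSupport h) :
    ∃ f : X → k, IsLocallyConstant f ∧ HasCompactSupport f ∧ ∀ y : Y, f y = h y := by
  classical
  set F := (hlc.finite_range_of_hasCompactSupport hcs).toFinset.erase 0
  have hfib : ∀ c ∈ F, ∃ V : Set X, IsClopen V ∧ IsCompact V ∧ Subtype.val ⁻¹' V = h ⁻¹' {c} :=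
    fun c hc => hY.exists_isClopen_isCompact_preimage_val_eq (hlc.isClopen_fiber c)
      (hlc.isCompact_fiber_of_hasCompactSupport hcs (Finset.ne_of_mem_erase hc))
  choose! V hVclopen hVcomp hVfib using hfib
  refine ⟨∑ c ∈ F, (V c).indicator (fun _ => c), ?_, ?_, fun y => ?_⟩
  · exact IsLocallyConstant.finset_sum fun c hc =>
      ((LocallyConstant.const X c).indicator (hVclopen c hc)).isLocallyConstant
  · exact HasCompactSupport.finset_sum fun c hc =>
      HasCompactSupport.intro (hVcomp c hc) fun x hx => indicator_of_notMem hx _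
  · have hmem : ∀ c ∈ F, (y : X) ∈ V c ↔ h y = c := fun c hc => Set.ext_iff.1 (hVfib c hc) y
    simp only [Finset.sum_apply, indicator_apply]
    rw [Finset.sum_congr rfl fun c hc => by rw [if_congr (hmem c hc) rfl rfl], Finset.sum_ite_eq]
    split_ifs with hy
    · rfl
    · by_contra hne
      exact hy (Finset.mem_erase.2 ⟨Ne.symm hne, by simp⟩)
end

section
/- For every locally constant, compactly supported function h : X^γ → k there exists a γ-invariant function f ∈ C_c^∞(X, k) whose restriction to X^γ equals h. That is, the restriction map from the space of γ-invariant elements of C_c^∞(X, k) to C_c^∞(X^γ, k) is surjective. -/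
/-!
A locally constant compactly supported `h` on `X^γ` is a finite sum `∑ c • 1_{h⁻¹{c}}` over its
nonzero values, and each compact open fibre `h⁻¹{c}` is the trace on `X^γ` of a compact open
subset of `X`; this extends `h` to some `f₀ ∈ C_c^∞(X, k)`. Then restrict `f₀` to the set of points
on whose `γ`-orbit it is constant: as `γ` has finite order, this is a finite intersection of clopen
sets, it is `γ`-invariant, and it contains `X^γ`.
-/

open Set Function

section ExtensionFromSubspace

variable {X Y k : Type*} [TopologicalSpace X] [LocallyCompactSpace X] [T2Space X]
  [TotallyDisconnectedSpace X] [TopologicalSpace Y]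

theorem exists_isCompact_isClopen_between {K U : Set X} (hK : IsCompact K) (hU : IsOpen U)
    (hKU : K ⊆ U) : ∃ C, IsCompact C ∧ IsClopen C ∧ K ⊆ C ∧ C ⊆ U := by
  obtain ⟨L, hL, hKL, hLU⟩ := exists_compact_between hK hU hKU
  have hclopen_nhd : ∀ x ∈ K, ∃ V, IsClopen V ∧ x ∈ V ∧ V ⊆ interior L := fun x hx =>
    loc_compact_Haus_tot_disc_of_zero_dim.mem_nhds_iff.1 (isOpen_interior.mem_nhds (hKL hx))
  choose! V hV using hclopen_nhd
  obtain ⟨t, htK, hKt⟩ :=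
    hK.elim_nhds_subcover V fun x hx => (hV x hx).1.isOpen.mem_nhds (hV x hx).2.1
  have htL : ⋃ x ∈ t, V x ⊆ L :=
    iUnion₂_subset fun x hx => (hV x (htK x hx)).2.2.trans interior_subset
  have htC : IsClopen (⋃ x ∈ t, V x) := isClopen_biUnion_finset fun x hx => (hV x (htK x hx)).1
  exact ⟨_, hL.of_isClosed_subset htC.isClosed htL, htC, hKt, htL.trans hLU⟩

theorem Topology.IsInducing.exists_isCompact_isClopen_preimage_eq {e : Y → X}
    (he : IsInducing e) {A : Set Y} (hAc : IsCompact A) (hAo : IsOpen A) :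
    ∃ B, IsCompact B ∧ IsClopen B ∧ e ⁻¹' B = A := by
  obtain ⟨O, hO, rfl⟩ := he.isOpen_iff.mp hAo
  obtain ⟨B, hBc, hBcl, hAB, hBO⟩ :=
    exists_isCompact_isClopen_between (hAc.image he.continuous) hO (image_preimage_subset e O)
  exact ⟨B, hBc, hBcl, (preimage_mono hBO).antisymm (image_subset_iff.mp hAB)⟩

theorem IsLocallyConstant.finite_image_of_isCompact {f : Y → k} (hf : IsLocallyConstant f)
    {K : Set Y} (hK : IsCompact K) : (f '' K).Finite := by
  have := isCompact_iff_compactSpace.mp hK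
  rw [image_eq_range]
  exact (hf.comp_continuous continuous_subtype_val).range_finite

theorem Topology.IsInducing.exists_isLocallyConstant_hasCompactSupport_comp_eq [AddCommMonoid k]
    {e : Y → X} (he : IsInducing e) {h : Y → k} (hlc : IsLocallyConstant h)
    (hcs : HasCompactSupport h) :
    ∃ f : X → k, IsLocallyConstant f ∧ HasCompactSupport f ∧ f ∘ e = h := by
  classical
  have hfibre : ∀ c, ∃ B, IsCompact B ∧ IsClopen B ∧ e ⁻¹' B = support h ∩ h ⁻¹' {c} := by
    intro c
    have hclopen : IsClopen (support h ∩ h ⁻¹' {c}) :=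
      (hlc.isClopen_fiber 0).compl.inter (hlc.isClopen_fiber c)
    exact he.exists_isCompact_isClopen_preimage_eq
      (hcs.of_isClosed_subset hclopen.isClosed (inter_subset_left.trans (subset_tsupport h)))
      hclopen.isOpen
  choose B hBc hBcl hB using hfibre
  set T := (hlc.finite_image_of_isCompact hcs).toFinset
  have hF : IsLocallyConstant (∑ c ∈ T, (B c).indicator fun _ => c) := by
    convert (∑ c ∈ T, (LocallyConstant.const X c).indicator (hBcl c)).isLocallyConstant
    exact (map_sum LocallyConstant.coeFnAddMonoidHom
      (fun c => (LocallyConstant.const X c).indicator (hBcl c)) T).symm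
  refine ⟨_, hF, HasCompactSupport.intro (T.isCompact_biUnion fun c _ => hBc c) fun x hx => ?_, ?_⟩
  · simp only [mem_iUnion₂, not_exists] at hx
    simp_all [Finset.sum_apply]
  · ext y
    have hmem : ∀ c, e y ∈ B c ↔ h y ≠ 0 ∧ h y = c := fun c => by
      rw [← mem_preimage, hB]
      rfl
    by_cases hy : h y = 0
    · simp [Finset.sum_apply, hmem, hy]
    · have hyT : h y ∈ T := by
        simpa [T] using ⟨y, subset_tsupport h hy, rfl⟩
      simp [Finset.sum_apply, indicator_apply, hmem, hy, hyT]

end ExtensionFromSubspace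

section PeriodicMap

variable {X k : Type*} {g : X → X} {l : ℕ} {f : X → k}

def constOrbitSet (g : X → X) (f : X → k) : Set X :=
  {x | ∀ n, f (g^[n] x) = f x}

theorem fixedPoints_subset_constOrbitSet : fixedPoints g ⊆ constOrbitSet g f :=
  fun x hx n => by rw [iterate_fixed hx]

theorem apply_mem_constOrbitSet_iff (hl : 0 < l) (hper : ∀ x, IsPeriodicPt g l x) {x : X} :
    g x ∈ constOrbitSet g f ↔ x ∈ constOrbitSet g f := by
  refine ⟨fun hx => ?_, fun hx n => ?_⟩
  · have hconst : ∀ m, f (g^[m] x) = f (g x) := fun m => by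
      rw [← hx (m + (l - 1)), ← iterate_succ_apply, Nat.succ_eq_add_one, add_assoc,
        Nat.sub_add_cancel hl, iterate_add_apply, hper x]
    exact fun n => (hconst n).trans (hconst 0).symm
  · rw [← iterate_succ_apply, hx (n + 1), ← hx 1, iterate_one]

variable [TopologicalSpace X]

theorem IsLocallyConstant.isClopen_setOf_eq {Z : Type*} {a b : X → Z} (ha : IsLocallyConstant a)
    (hb : IsLocallyConstant b) : IsClopen {x | a x = b x} := by
  simpa using (ha.comp₂ hb (· = ·)).isClopen_fiber True

theorem isClopen_constOrbitSet (hg : Continuous g) (hl : 0 < l) (hper : ∀ x, IsPeriodicPt g l x)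
    (hf : IsLocallyConstant f) : IsClopen (constOrbitSet g f) := by
  have hfinite : constOrbitSet g f = ⋂ n ∈ Finset.range l, {x | f (g^[n] x) = f x} := by
    ext x
    simp only [constOrbitSet, mem_ofPred_eq, mem_iInter, Finset.mem_range]
    exact ⟨fun hx n _ => hx n,
      fun hx n => (hper x).iterate_mod_apply (m := n) ▸ hx _ (Nat.mod_lt n hl)⟩
  rw [hfinite]
  exact isClopen_biInter_finset fun n _ => (hf.comp_continuous (hg.iterate n)).isClopen_setOf_eq hf

theorem IsLocallyConstant.exists_invariant_eqOn_fixedPoints [Zero k] (hg : Continuous g)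
    (hl : 0 < l) (hper : ∀ x, IsPeriodicPt g l x) (hlc : IsLocallyConstant f)
    (hcs : HasCompactSupport f) :
    ∃ f' : X → k, IsLocallyConstant f' ∧ HasCompactSupport f' ∧ (∀ x, f' (g x) = f' x) ∧
      EqOn f' f (fixedPoints g) := by
  classical
  have hW := isClopen_constOrbitSet hg hl hper hlc
  refine ⟨(constOrbitSet g f).indicator f,
    (LocallyConstant.indicator ⟨f, hlc⟩ hW).isLocallyConstant, hcs.mono (support_indicator.trans_subset inter_subset_right), fun x => ?_,
    eqOn_indicator.mono fixedPoints_subset_constOrbitSet⟩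
  simp only [indicator_apply, apply_mem_constOrbitSet_iff hl hper]
  split_ifs with hx
  exacts [hx 1, rfl]

end PeriodicMap

theorem extend_invariant_locallyConstant_compactSupport_general
    (l : ℕ) (hl : l.Prime)
    (X : Type*) [TopologicalSpace X] [LocallyCompactSpace X] [T2Space X]
    [TotallyDisconnectedSpace X]
    (γ : X ≃ₜ X) (hγl : ∀ x, (⇑γ)^[l] x = x)
    (k : Type*) [Field k]
    (h : {x : X // γ x = x} → k) (hlc : IsLocallyConstant h)
    (hcs : HasCompactSupport h) :
    ∃ f : X → k, IsLocallyConstant f ∧ HasCompactSupport f ∧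
      (∀ x, f (γ x) = f x) ∧ ∀ y : {x : X // γ x = x}, f y = h y := by
  obtain ⟨f₀, hf₀lc, hf₀cs, hf₀h⟩ :=
    Topology.IsInducing.subtypeVal.exists_isLocallyConstant_hasCompactSupport_comp_eq hlc hcs
  obtain ⟨f, hflc, hfcs, hfγ, hff₀⟩ :=
    hf₀lc.exists_invariant_eqOn_fixedPoints γ.continuous hl.pos hγl hf₀cs
  exact ⟨f, hflc, hfcs, hfγ, fun y => (hff₀ y.2).trans (congrFun hf₀h y)⟩

/-- Let `γ` be a homeomorphism, of order dividing the prime `l`, of a locally compact,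
Hausdorff, totally disconnected, second countable space `X`. Every locally constant,
compactly supported `k`-valued function `h` on the fixed-point set `X^γ` is the
restriction of a `γ`-invariant locally constant, compactly supported function on `X`;
i.e. the restriction map `C_c^∞(X, k)^γ → C_c^∞(X^γ, k)` is surjective. -/
theorem extend_invariant_locallyConstant_compactSupport
    (l : ℕ) (hl : l.Prime)
    (X : Type*) [TopologicalSpace X] [LocallyCompactSpace X] [T2Space X]
    [TotallyDisconnectedSpace X] [SecondCountableTopology X]
    (γ : X ≃ₜ X) (hγl : ∀ x, (⇑γ)^[l] x = x)
    (k : Type*) [Field k]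
    (h : {x : X // γ x = x} → k) (hlc : IsLocallyConstant h)
    (hcs : HasCompactSupport h) :
    ∃ f : X → k, IsLocallyConstant f ∧ HasCompactSupport f ∧
      (∀ x, f (γ x) = f x) ∧ ∀ y : {x : X // γ x = x}, f y = h y :=
  extend_invariant_locallyConstant_compactSupport_general l hl X γ hγl k h hlc hcs
end

section
/- Assume k has characteristic l. If f ∈ C_c^∞(X, k) is γ-invariant and vanishes identically on the fixed-point set X^γ, then f lies in the image of the norm operator: there exists g ∈ C_c^∞(X, k) with f = N(g) = Σ_{i=0}^{l-1} γ^i·g. (Together with surjectivity of restriction, this computes the Tate cohomology group Ĥ⁰ of C_c^∞(X, k).) -/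
/-- Let `γ` be a homeomorphism, of order dividing the prime `l`, of a locally compact,
Hausdorff, totally disconnected, second countable space `X`, and let `k` be a field of
characteristic `l`. If `f ∈ C_c^∞(X, k)` is `γ`-invariant and vanishes on the
fixed-point set `X^γ`, then `f` is in the image of the norm operator:
`f = N(g) = ∑_{i=0}^{l-1} γ^i · g` for some `g ∈ C_c^∞(X, k)`, where
`(γ^i · g)(x) = g(γ^{-i} x)`. -/
theorem tate_H0_norm_surjective_part
    (l : ℕ) (hl : l.Prime)
    (X : Type*) [TopologicalSpace X] [LocallyCompactSpace X] [T2Space X]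
    [TotallyDisconnectedSpace X] [SecondCountableTopology X]
    (γ : X ≃ₜ X) (hγl : ∀ x, (⇑γ)^[l] x = x)
    (k : Type*) [Field k] [CharP k l]
    (f : X → k) (hflc : IsLocallyConstant f) (hfcs : HasCompactSupport f)
    (hinv : ∀ x, f (γ x) = f x) (hvan : ∀ x, γ x = x → f x = 0) :
    ∃ g : X → k, IsLocallyConstant g ∧ HasCompactSupport g ∧
      ∀ x, f x = ∑ i ∈ Finset.range l, g ((⇑γ.symm)^[i] x) := by
  classical
  have hl0 : 0 < l := hl.pos
  set β : X → X := ⇑γ.symm with hβdef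
  have hβc : Continuous β := γ.symm.continuous
  have hγβ : ∀ m y, (⇑γ)^[m] (β^[m] y) = y := fun m y =>
    (Function.LeftInverse.iterate γ.apply_symm_apply m) y
  have hβl : ∀ x, β^[l] x = x := by
    intro x
    have h1 : β^[l] ((⇑γ)^[l] x) = x :=
      (Function.LeftInverse.iterate γ.symm_apply_apply l) x
    rwa [hγl x] at h1
  have hper : ∀ x, Function.IsPeriodicPt β l x := fun x => hβl x
  have hmod : ∀ (m : ℕ) (x : X), β^[m] x = β^[m % l] x := fun m x =>
    ((hper x).iterate_mod_apply m).symm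
  -- f is invariant under β and its iterates
  have hinvβ : ∀ x, f (β x) = f x := by
    intro x
    conv_rhs => rw [← γ.apply_symm_apply x]
    rw [hinv]
  have hinvβi : ∀ (i : ℕ) (x : X), f (β^[i] x) = f x := by
    intro i
    induction i with
    | zero => simp
    | succ n ih =>
      intro x
      rw [Function.iterate_succ_apply, ih (β x), hinvβ]
  -- fixed points of β are fixed points of γ, on which f vanishes
  have hvanβ : ∀ x, β x = x → f x = 0 := by
    intro x hx
    have h2 : γ (β x) = x := γ.apply_symm_apply x
    rw [hx] at h2
    exact hvan x h2
  -- points of the support are not fixed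
  have hKfree : ∀ x ∈ tsupport f, β x ≠ x := by
    intro x hx hfix
    have hx0 : f x = 0 := hvanβ x hfix
    rcases mem_closure_iff.mp hx (f ⁻¹' {0}) (hflc {0}) (by simpa using hx0) with ⟨y, hy1, hy2⟩
    exact hy2 (by simpa using hy1)
  -- orbits of non-fixed points have exact length l
  have horder : ∀ x, β x ≠ x → ∀ i, 0 < i → i < l → β^[i] x ≠ x := by
    intro x hfix i hi hil heq
    have hp : Function.IsPeriodicPt β i x := heq
    have h1 : Function.minimalPeriod β x ∣ i := hp.minimalPeriod_dvd
    have h2 : Function.minimalPeriod β x ∣ l := (hper x).minimalPeriod_dvd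
    rcases hl.eq_one_or_self_of_dvd _ h2 with h | h
    · exact hfix (Function.minimalPeriod_eq_one_iff_isFixedPt.mp h)
    · have := Nat.le_of_dvd hi h1
      omega
  -- orbit membership is invariant along the orbit
  have hORB : ∀ (S : Set X) (a : ℕ) (x : X),
      (∃ i, i < l ∧ β^[i] (β^[a] x) ∈ S) ↔ (∃ i, i < l ∧ β^[i] x ∈ S) := by
    intro S a x
    constructor
    · rintro ⟨i, hil, hi⟩
      refine ⟨(i + a) % l, Nat.mod_lt _ hl0, ?_⟩
      rwa [← hmod, Function.iterate_add_apply]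
    · rintro ⟨i', hi'l, hi'⟩
      refine ⟨(i' + (l - a % l)) % l, Nat.mod_lt _ hl0, ?_⟩
      have ha : a % l < l := Nat.mod_lt _ hl0
      have : β^[(i' + (l - a % l)) % l] (β^[a] x) = β^[i'] x := by
        rw [hmod a x, ← Function.iterate_add_apply, hmod]
        congr 1
        rw [Nat.mod_add_mod]
        have h1 : i' + (l - a % l) + a % l = i' + l := by omega
        rw [h1, Nat.add_mod_right, Nat.mod_eq_of_lt hi'l]
      rwa [this]
  -- local clopen slices
  have hlocal : ∀ x : X, ∃ V : Set X, IsClopen V ∧ (x ∈ tsupport f → x ∈ V) ∧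
      ∀ i, 0 < i → i < l → ∀ y ∈ V, β^[i] y ∉ V := by
    intro x
    by_cases hx : x ∈ tsupport f
    · have hfree := hKfree x hx
      set F : Set X := (fun i => β^[i] x) '' Set.Ico 1 l with hF
      have hFfin : F.Finite := (Set.finite_Ico 1 l).image _
      have hxF : x ∉ F := by
        rintro ⟨i, ⟨hi1, hi2⟩, hix⟩
        exact horder x hfree i hi1 hi2 hix
      obtain ⟨U, hUclopen, hxU, hUF⟩ :=
        loc_compact_Haus_tot_disc_of_zero_dim.mem_nhds_iff.mp
          (hFfin.isClosed.isOpen_compl.mem_nhds hxF)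
      refine ⟨U \ ⋃ m ∈ Finset.Ico 1 l, (⇑γ)^[m] ⁻¹' U, ?_, fun _ => ⟨hxU, ?_⟩, ?_⟩
      · exact hUclopen.diff (isClopen_biUnion_finset fun m _ =>
          hUclopen.preimage ((Homeomorph.continuous γ).iterate m))
      · intro hmem
        rcases Set.mem_iUnion₂.mp hmem with ⟨m, hm, hmx⟩
        rw [Finset.mem_Ico] at hm
        have h3 : β^[m] (β^[l - m] x) = x := by
          rw [← Function.iterate_add_apply, show m + (l - m) = l by omega, hβl]
        have hx2 : (⇑γ)^[m] x = β^[l - m] x := by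
          conv_lhs => rw [← h3]
          exact hγβ m _
        have hmem2 : β^[l - m] x ∈ F := ⟨l - m, ⟨by omega, by omega⟩, rfl⟩
        have hmem3 : β^[l - m] x ∈ U := hx2 ▸ hmx
        exact hUF hmem3 hmem2
      · intro i hi hil y hy hycontra
        have h1 : β^[i] y ∈ ⋃ m ∈ Finset.Ico 1 l, (⇑γ)^[m] ⁻¹' U := by
          refine Set.mem_iUnion₂.mpr ⟨i, Finset.mem_Ico.mpr ⟨hi, hil⟩, ?_⟩
          show (⇑γ)^[i] (β^[i] y) ∈ U
          rw [hγβ]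
          exact hy.1
        exact hycontra.2 h1
    · exact ⟨∅, isClopen_empty, fun h => absurd h hx, by simp⟩
  choose V hVclopen hVmem hVdisj using hlocal
  obtain ⟨t, ht⟩ := hfcs.elim_finite_subcover V (fun x => (hVclopen x).isOpen)
    (fun x hx => Set.mem_iUnion.mpr ⟨x, hVmem x hx⟩)
  set L : List X := t.toList with hL
  set n : ℕ := L.length with hn
  set W : ℕ → Set X := fun i => if h : i < L.length then V (L.get ⟨i, h⟩) else ∅ with hW
  have hW1 : ∀ j, IsClopen (W j) := by
    intro j
    by_cases h : j < L.length
    · simp only [hW, dif_pos h]; exact hVclopen _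
    · simp only [hW, dif_neg h]; exact isClopen_empty
  have hW2 : ∀ j i, 0 < i → i < l → ∀ y ∈ W j, β^[i] y ∉ W j := by
    intro j i hi hil y hy
    by_cases h : j < L.length
    · simp only [hW, dif_pos h] at hy ⊢
      exact hVdisj _ i hi hil y hy
    · simp only [hW, dif_neg h] at hy
      exact absurd hy (Set.notMem_empty y)
  have hW3 : ∀ x ∈ tsupport f, ∃ j, j < n ∧ x ∈ W j := by
    intro x hx
    rcases Set.mem_iUnion₂.mp (ht hx) with ⟨i, hit, hxi⟩
    have : i ∈ L := Finset.mem_toList.mpr hit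
    rcases List.mem_iff_get.mp this with ⟨idx, hidx⟩
    refine ⟨idx.1, idx.2, ?_⟩
    simp only [hW, dif_pos idx.2]
    rw [show L.get ⟨idx.1, idx.2⟩ = L.get idx from rfl, hidx]
    exact hxi
  -- the fundamental domain
  set D : Set X := {y | ∃ j, j < n ∧ y ∈ W j ∧ ∀ j' < j, ∀ i < l, β^[i] y ∉ W j'} with hD
  have hDclopen : IsClopen D := by
    have : D = ⋃ j ∈ Finset.range n, (W j ∩
        ⋂ j' ∈ Finset.range j, ⋂ i ∈ Finset.range l, (β^[i] ⁻¹' W j')ᶜ) := by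
      ext y
      simp only [hD, Set.mem_setOf_eq, Set.mem_iUnion, Set.mem_inter_iff, Set.mem_iInter,
        Set.mem_compl_iff, Set.mem_preimage, Finset.mem_range]
      constructor
      · rintro ⟨j, hj, hyW, hmin⟩
        exact ⟨j, hj, hyW, fun j' hj' i hi => hmin j' hj' i hi⟩
      · rintro ⟨j, hj, hyW, hmin⟩
        exact ⟨j, hj, hyW, fun j' hj' i hi => hmin j' hj' i hi⟩
    rw [this]
    refine isClopen_biUnion_finset fun j _ => (hW1 j).inter ?_
    refine isClopen_biInter_finset fun j' _ => ?_
    refine isClopen_biInter_finset fun i _ => ?_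
    exact ((hW1 j').preimage (hβc.iterate i)).compl
  set g : X → k := D.indicator f with hg
  -- the key orbit-counting fact
  have key : ∀ x : X, f x ≠ 0 → ∃ i0, i0 < l ∧ ∀ i < l, (β^[i] x ∈ D ↔ i = i0) := by
    intro x hfx
    have horb : ∀ i : ℕ, β^[i] x ∈ tsupport f := fun i =>
      subset_tsupport f (by simp [Function.mem_support, hinvβi i x, hfx])
    have hP : ∃ j, j < n ∧ ∃ i, i < l ∧ β^[i] x ∈ W j := by
      have hxK : x ∈ tsupport f := by simpa using horb 0
      rcases hW3 x hxK with ⟨j, hj, hxW⟩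
      exact ⟨j, hj, 0, hl0, by simpa using hxW⟩
    set j0 : ℕ := Nat.find hP with hj0def
    obtain ⟨hj0n, i0, hi0l, hi0W⟩ := Nat.find_spec hP
    have huniq : ∀ i < l, β^[i] x ∈ W j0 → i = i0 := by
      intro i hi hiW
      by_contra hne
      rcases Nat.lt_or_ge i i0 with hlt | hge
      · have h1 : β^[i0] x = β^[i0 - i] (β^[i] x) := by
          rw [← Function.iterate_add_apply]
          congr 1; omega
        exact hW2 j0 (i0 - i) (by omega) (by omega) _ hiW (h1 ▸ hi0W)
      · have hlt : i0 < i := by omega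
        have h1 : β^[i] x = β^[i - i0] (β^[i0] x) := by
          rw [← Function.iterate_add_apply]
          congr 1; omega
        exact hW2 j0 (i - i0) (by omega) (by omega) _ hi0W (h1 ▸ hiW)
    refine ⟨i0, hi0l, fun i hi => ⟨?_, ?_⟩⟩
    · rintro ⟨j, hjn, hyW, hmin⟩
      have hle : j0 ≤ j := Nat.find_min' hP ⟨hjn, i, hi, hyW⟩
      rcases eq_or_lt_of_le hle with heq | hltj
      · exact huniq i hi (heq ▸ hyW)
      · exfalso
        have h1 : ∃ i', i' < l ∧ β^[i'] (β^[i] x) ∈ W j0 :=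
          (hORB (W j0) i x).mpr ⟨i0, hi0l, hi0W⟩
        rcases h1 with ⟨i', hi'l, hi'W⟩
        exact hmin j0 hltj i' hi'l hi'W
    · rintro rfl
      refine ⟨j0, hj0n, hi0W, ?_⟩
      intro j' hj' i' hi'l hi'W
      have hnP := Nat.find_min hP hj'
      exact hnP ⟨hj'.trans hj0n, (hORB (W j') i x).mp ⟨i', hi'l, hi'W⟩⟩
  refine ⟨g, ?_, ?_, ?_⟩
  · -- locally constant
    rw [IsLocallyConstant.iff_exists_open]
    intro x
    by_cases hx : x ∈ D
    · obtain ⟨U, hUo, hxU, hU⟩ := (IsLocallyConstant.iff_exists_open f).mp hflc x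
      refine ⟨U ∩ D, hUo.inter hDclopen.isOpen, ⟨hxU, hx⟩, ?_⟩
      intro y hy
      rw [hg, Set.indicator_of_mem hy.2, Set.indicator_of_mem hx]
      exact hU y hy.1
    · refine ⟨Dᶜ, hDclopen.compl.isOpen, hx, ?_⟩
      intro y hy
      rw [hg, Set.indicator_of_notMem hy, Set.indicator_of_notMem hx]
  · -- compact support
    exact hfcs.mono (by rw [hg, Set.support_indicator]; exact Set.inter_subset_right)
  · -- norm identity
    intro x
    by_cases hfx : f x = 0
    · have : ∀ i ∈ Finset.range l, g (β^[i] x) = 0 := by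
        intro i _
        have h0 : f (β^[i] x) = 0 := by rw [hinvβi]; exact hfx
        rw [hg, Set.indicator_apply]
        split <;> simp [h0]
      rw [Finset.sum_congr rfl this]
      simp [hfx]
    · obtain ⟨i0, hi0l, hiff⟩ := key x hfx
      have hterm : ∀ i ∈ Finset.range l, g (β^[i] x) = if i = i0 then f x else 0 := by
        intro i hi
        rw [Finset.mem_range] at hi
        rw [hg, Set.indicator_apply]
        by_cases hcase : i = i0
        · rw [if_pos ((hiff i hi).mpr hcase), if_pos hcase, hinvβi]
        · rw [if_neg (fun h => hcase ((hiff i hi).mp h)), if_neg hcase]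
      rw [Finset.sum_congr rfl hterm, Finset.sum_ite_eq' (Finset.range l) i0 (fun _ => f x),
        if_pos (Finset.mem_range.mpr hi0l)]
end

section
/- Assume k has characteristic l and that the action of γ on X is free (γ(x) ≠ x for all x ∈ X). Then both Tate cohomology groups of the γ-action on C_c^∞(X, k) vanish: every γ-invariant f ∈ C_c^∞(X, k) is of the form N(g) for some g ∈ C_c^∞(X, k), and every f ∈ C_c^∞(X, k) with N(f) = 0 is of the form g − γ·g for some g ∈ C_c^∞(X, k). -/
open Finset Function Set

/-!
Write `σ = γ⁻¹`. As `l` is prime and `γ` is free, no `σ^m` with `0 < m < l` has a fixed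
point, so every point has a compact open neighbourhood `V` disjoint from its translates
`σ^m V`; then `N 1_V = 1` on `V`, and gluing finitely many of these via
`1 - N(h₁ + (1 - N h₁) h₂) = (1 - N h₁)(1 - N h₂)` gives `h ∈ C_c^∞(X, k)` with `N h = 1` on
any prescribed compact set. For `f` invariant, `f = N(f h)`; for `N f = 0`, the contracting
homotopy `g = ∑_{0 ≤ t ≤ j < l} (h ∘ σ^j)(f ∘ σ^t)` satisfies `g - g ∘ σ = f · N h = f`.
-/

section Sums

variable {X R ι : Type*} [TopologicalSpace X]

theorem IsLocallyConstant.sum [AddCommMonoid R] (s : Finset ι) {f : ι → X → R}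
    (hf : ∀ i ∈ s, IsLocallyConstant (f i)) : IsLocallyConstant (∑ i ∈ s, f i) :=
  Finset.sum_induction f IsLocallyConstant (fun _ _ hf hg => hf.add hg)
    (IsLocallyConstant.const 0) hf

theorem HasCompactSupport.sum [AddCommMonoid R] (s : Finset ι) {f : ι → X → R}
    (hf : ∀ i ∈ s, HasCompactSupport (f i)) : HasCompactSupport (∑ i ∈ s, f i) :=
  Finset.sum_induction f HasCompactSupport (fun _ _ => HasCompactSupport.add)
    HasCompactSupport.zero hf

theorem HasCompactSupport.comp_iterate [Zero R] {f : X → R} (hf : HasCompactSupport f)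
    (σ : X ≃ₜ X) (n : ℕ) : HasCompactSupport (f ∘ (⇑σ)^[n]) := by
  induction n with
  | zero => exact hf
  | succ n ih => rw [iterate_succ, ← comp_assoc]; exact ih.comp_homeomorph σ

end Sums

theorem Finset.sum_range_shift_of_eq {M : Type*} [AddCommMonoid M] (a : ℕ → M) {n : ℕ}
    (ha : a n = a 0) : ∑ i ∈ range n, a (i + 1) = ∑ i ∈ range n, a i := by
  cases n with
  | zero => rfl
  | succ m => rw [sum_range_succ, ha, sum_range_succ']

theorem Finset.sum_mul_partialSum_sub_shift {R : Type*} [CommRing R] (a b : ℕ → R) {n : ℕ}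
    (ha : a n = a 0) (hb : b n = b 0) (hsum : ∑ t ∈ range n, b t = 0) :
    ∑ j ∈ range n, a j * ∑ t ∈ range (j + 1), b t
      - ∑ j ∈ range n, a (j + 1) * ∑ t ∈ range (j + 1), b (t + 1) =
    b 0 * ∑ j ∈ range n, a j := by
  obtain ⟨B, hB⟩ : ∃ B : ℕ → R, ∀ j, B j = ∑ t ∈ range (j + 1), b t := ⟨_, fun _ => rfl⟩
  have hshift : ∀ j, ∑ t ∈ range (j + 1), b (t + 1) = B (j + 1) - b 0 := fun j => by
    rw [hB, sum_range_succ' b (j + 1)]; ring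
  have hB0 : B 0 = b 0 := by rw [hB, zero_add, sum_range_one]
  have hBn : B n = b 0 := by rw [hB, sum_range_succ, hsum, hb, zero_add]
  calc _ = ∑ j ∈ range n, (a j * B j - a (j + 1) * B (j + 1))
          + b 0 * ∑ j ∈ range n, a (j + 1) := by
        simp only [hshift, ← hB, mul_sub, sum_sub_distrib, ← sum_mul]; ring
    _ = b 0 * ∑ j ∈ range n, a j := by
        rw [sum_range_sub', sum_range_shift_of_eq a ha, hB0, hBn, ha]; ring

theorem Function.iterate_ne_self_of_prime {α : Type*} {f : α → α} {p m : ℕ} {x : α}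
    (hp : p.Prime) (hfp : f^[p] x = x) (hfx : f x ≠ x) (hm0 : 0 < m) (hmp : m < p) :
    f^[m] x ≠ x := by
  intro hfm
  rcases hp.eq_one_or_self_of_dvd _ (IsPeriodicPt.minimalPeriod_dvd hfp) with h1 | hpm
  · exact hfx (minimalPeriod_eq_one_iff_isFixedPt.1 h1)
  · have := Nat.le_of_dvd hm0 (hpm ▸ IsPeriodicPt.minimalPeriod_dvd hfm)
    omega

section Topology

variable {X : Type*} [TopologicalSpace X] [LocallyCompactSpace X] [T2Space X]
  [TotallyDisconnectedSpace X]

theorem exists_isClopen_isCompact_subset {x : X} {U : Set X} (hU : IsOpen U) (hx : x ∈ U) :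
    ∃ V : Set X, IsClopen V ∧ IsCompact V ∧ x ∈ V ∧ V ⊆ U := by
  obtain ⟨s, hs, hxs, hsU⟩ := exists_compact_subset hU hx
  obtain ⟨V, hV, hxV, hVs⟩ := loc_compact_Haus_tot_disc_of_zero_dim.mem_nhds_iff.1
    (isOpen_interior.mem_nhds hxs)
  exact ⟨V, hV, hs.of_isClosed_subset hV.1 (hVs.trans interior_subset), hxV,
    hVs.trans (interior_subset.trans hsU)⟩

theorem exists_isClopen_isCompact_iterate_notMem {σ : X → X} (hσ : Continuous σ) {n : ℕ}
    {x : X} (hx : ∀ m, 0 < m → m < n → σ^[m] x ≠ x) :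
    ∃ V : Set X, IsClopen V ∧ IsCompact V ∧ x ∈ V ∧
      ∀ m, 0 < m → m < n → ∀ z ∈ V, σ^[m] z ∉ V := by
  have hsep : ∀ m, ∃ U : Set X, IsOpen U ∧ x ∈ U ∧
      (0 < m → m < n → ∀ z ∈ U, σ^[m] z ∉ U) := by
    intro m
    by_cases hm : 0 < m ∧ m < n
    · obtain ⟨A, B, hA, hB, hxA, hxB, hAB⟩ := t2_separation (hx m hm.1 hm.2).symm
      exact ⟨A ∩ σ^[m] ⁻¹' B, hA.inter (hB.preimage (hσ.iterate m)), ⟨hxA, hxB⟩,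
        fun _ _ z hz hmz => Set.disjoint_left.1 hAB hmz.1 hz.2⟩
    · exact ⟨univ, isOpen_univ, mem_univ x, fun hm0 hmn => (hm ⟨hm0, hmn⟩).elim⟩
  choose U hUo hxU hU using hsep
  obtain ⟨V, hV, hVc, hxV, hVU⟩ := exists_isClopen_isCompact_subset
    (isOpen_biInter_finset (s := range n) fun m _ => hUo m) (mem_iInter₂.2 fun m _ => hxU m)
  refine ⟨V, hV, hVc, hxV, fun m hm0 hmn z hz hmz => ?_⟩
  exact hU m hm0 hmn z (mem_iInter₂.1 (hVU hz) m (mem_range.2 hmn))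
    (mem_iInter₂.1 (hVU hmz) m (mem_range.2 hmn))

end Topology

section OrbitSum

variable {X R : Type*}

def orbitSum [AddCommMonoid R] (σ : X → X) (n : ℕ) (h : X → R) (x : X) : R :=
  ∑ i ∈ range n, h (σ^[i] x)

def orbitContraction [Semiring R] (σ : X → X) (n : ℕ) (h f : X → R) (x : X) : R :=
  ∑ j ∈ range n, h (σ^[j] x) * orbitSum σ (j + 1) f x

variable {σ : X → X} {n : ℕ}

theorem orbitSum_eq_sum_comp [AddCommMonoid R] (h : X → R) :
    orbitSum σ n h = ∑ i ∈ range n, h ∘ σ^[i] := by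
  ext x
  simp only [orbitSum, Finset.sum_apply, comp_apply]

theorem orbitSum_add [AddCommMonoid R] (f g : X → R) :
    orbitSum σ n (f + g) = orbitSum σ n f + orbitSum σ n g := by
  ext x
  simp only [orbitSum, Pi.add_apply, sum_add_distrib]

theorem orbitSum_apply_self [AddCommMonoid R] (h : X → R) {x : X} (hx : σ^[n] x = x) :
    orbitSum σ n h (σ x) = orbitSum σ n h x := by
  simp only [orbitSum, ← iterate_succ_apply]
  exact sum_range_shift_of_eq (fun i => h (σ^[i] x)) (by rw [hx]; rfl)

theorem orbitSum_mul_of_invariant [Semiring R] {u : X → R} (hu : ∀ x, u (σ x) = u x)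
    (h : X → R) (x : X) : orbitSum σ n (u * h) x = u x * orbitSum σ n h x := by
  have hui : ∀ i, u (σ^[i] x) = u x := fun i =>
    congrFun (iterate_invariant (funext hu) i) x
  simp only [orbitSum, Pi.mul_apply, hui, mul_sum]

theorem orbitSum_indicator_eq_one [AddCommMonoidWithOne R] (hn : 0 < n) {V : Set X}
    (hV : ∀ m, 0 < m → m < n → ∀ z ∈ V, σ^[m] z ∉ V) {x : X} (hx : x ∈ V) :
    orbitSum σ n (V.indicator (1 : X → R)) x = 1 := by
  rw [orbitSum, sum_eq_single_of_mem 0 (mem_range.2 hn)]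
  · exact indicator_of_mem hx 1
  · intro i hi hi0
    exact indicator_of_notMem (hV i (Nat.pos_of_ne_zero hi0) (mem_range.1 hi) x hx) 1

theorem orbitContraction_sub_apply_self [CommRing R] (h f : X → R) {x : X}
    (hx : σ^[n] x = x) (hf : orbitSum σ n f x = 0) :
    orbitContraction σ n h f x - orbitContraction σ n h f (σ x) = f x * orbitSum σ n h x := by
  simp only [orbitContraction, orbitSum, ← iterate_succ_apply]
  exact sum_mul_partialSum_sub_shift (fun j => h (σ^[j] x)) (fun t => f (σ^[t] x))
    (by rw [hx]; rfl) (by rw [hx]; rfl) hf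

theorem orbitSum_mul_eq_self [Semiring R] {f h : X → R} (hf : ∀ x, f (σ x) = f x)
    (hh : ∀ x ∈ support f, orbitSum σ n h x = 1) : orbitSum σ n (f * h) = f := by
  ext x
  rw [orbitSum_mul_of_invariant hf]
  by_cases hx : f x = 0
  · rw [hx, zero_mul]
  · rw [hh x hx, mul_one]

theorem orbitContraction_sub_apply_self_of_orbitSum_eq_one [CommRing R] {f h : X → R}
    (hσn : ∀ x, σ^[n] x = x) (hf : ∀ x, orbitSum σ n f x = 0)
    (hh : ∀ x ∈ support f, orbitSum σ n h x = 1) (x : X) :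
    orbitContraction σ n h f x - orbitContraction σ n h f (σ x) = f x := by
  rw [orbitContraction_sub_apply_self h f (hσn x) (hf x)]
  by_cases hx : f x = 0
  · rw [hx, zero_mul]
  · rw [hh x hx, mul_one]

theorem orbitContraction_eq_sum [Semiring R] (h f : X → R) :
    orbitContraction σ n h f = ∑ j ∈ range n, (h ∘ σ^[j]) * orbitSum σ (j + 1) f := by
  ext x
  simp only [orbitContraction, Finset.sum_apply, Pi.mul_apply, comp_apply]

variable [TopologicalSpace X]

theorem IsLocallyConstant.orbitSum [AddCommMonoid R] (hσ : Continuous σ) {h : X → R}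
    (hh : IsLocallyConstant h) : IsLocallyConstant (orbitSum σ n h) := by
  rw [orbitSum_eq_sum_comp]
  exact IsLocallyConstant.sum _ fun i _ => hh.comp_continuous (hσ.iterate i)

theorem IsLocallyConstant.orbitContraction [Semiring R] (hσ : Continuous σ) {h f : X → R}
    (hh : IsLocallyConstant h) (hf : IsLocallyConstant f) :
    IsLocallyConstant (orbitContraction σ n h f) := by
  rw [orbitContraction_eq_sum]
  exact IsLocallyConstant.sum _ fun j _ =>
    (hh.comp_continuous (hσ.iterate j)).mul (hf.orbitSum hσ)

theorem HasCompactSupport.orbitContraction [Semiring R] {σ : X ≃ₜ X} {h : X → R}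
    (hh : HasCompactSupport h) (f : X → R) :
    HasCompactSupport (orbitContraction σ n h f) := by
  rw [orbitContraction_eq_sum]
  exact HasCompactSupport.sum _ fun j _ => (hh.comp_iterate σ j).mul_right

end OrbitSum

theorem exists_orbitSum_eq_one {X : Type*} [TopologicalSpace X] [LocallyCompactSpace X]
    [T2Space X] [TotallyDisconnectedSpace X] (R : Type*) [CommRing R] {σ : X → X}
    (hσ : Continuous σ) {n : ℕ} (hn : 0 < n) (hσn : ∀ x, σ^[n] x = x)
    (hfree : ∀ x, ∀ m, 0 < m → m < n → σ^[m] x ≠ x) {K : Set X} (hK : IsCompact K) :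
    ∃ h : X → R, IsLocallyConstant h ∧ HasCompactSupport h ∧ ∀ x ∈ K, orbitSum σ n h x = 1 := by
  refine hK.induction_on (p := fun S => ∃ h : X → R, IsLocallyConstant h ∧
    HasCompactSupport h ∧ ∀ x ∈ S, orbitSum σ n h x = 1) ?_ ?_ ?_ ?_
  · exact ⟨0, IsLocallyConstant.const 0, HasCompactSupport.zero, fun x hx => hx.elim⟩
  · rintro S T hST ⟨h, hlc, hcs, hT⟩
    exact ⟨h, hlc, hcs, fun x hx => hT x (hST hx)⟩
  · rintro S T ⟨h₁, hlc₁, hcs₁, hS⟩ ⟨h₂, hlc₂, hcs₂, hT⟩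
    set u : X → R := 1 - orbitSum σ n h₁
    have hu : ∀ x, u (σ x) = u x := fun x => by
      simp only [u, Pi.sub_apply, Pi.one_apply, orbitSum_apply_self h₁ (hσn x)]
    have hN : ∀ x, orbitSum σ n (h₁ + u * h₂) x = 1 - u x * (1 - orbitSum σ n h₂ x) := by
      intro x
      rw [orbitSum_add, Pi.add_apply, orbitSum_mul_of_invariant hu]
      simp only [u, Pi.sub_apply, Pi.one_apply]
      ring
    have hlc : IsLocallyConstant u := (IsLocallyConstant.const 1).sub (hlc₁.orbitSum hσ)
    refine ⟨h₁ + u * h₂, hlc₁.add (hlc.mul hlc₂), hcs₁.add hcs₂.mul_left, ?_⟩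
    rintro x (hx | hx)
    · rw [hN]
      simp only [u, Pi.sub_apply, Pi.one_apply, hS x hx, sub_self, zero_mul, sub_zero]
    · rw [hN, hT x hx, sub_self, mul_zero, sub_zero]
  · intro x _
    obtain ⟨V, hV, hVc, hxV, hVσ⟩ := exists_isClopen_isCompact_iterate_notMem hσ (hfree x)
    refine ⟨V, mem_nhdsWithin_of_mem_nhds (hV.isOpen.mem_nhds hxV), V.indicator (1 : X → R),
      (LocallyConstant.indicator 1 hV).isLocallyConstant,
      HasCompactSupport.intro' hVc hV.isClosed fun y hy => indicator_of_notMem hy 1,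
      fun y hy => orbitSum_indicator_eq_one hn hVσ hy⟩

theorem tate_cohomology_vanishes_of_free_general
    (l : ℕ) (hl : l.Prime)
    (X : Type*) [TopologicalSpace X] [LocallyCompactSpace X] [T2Space X]
    [TotallyDisconnectedSpace X]
    (γ : X ≃ₜ X) (hγl : ∀ x, (⇑γ)^[l] x = x)
    (hfree : ∀ x : X, γ x ≠ x)
    (k : Type*) [Field k] :
    (∀ f : X → k, IsLocallyConstant f → HasCompactSupport f →
      (∀ x, f (γ x) = f x) →
      ∃ g : X → k, IsLocallyConstant g ∧ HasCompactSupport g ∧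
        ∀ x, f x = ∑ i ∈ Finset.range l, g ((⇑γ.symm)^[i] x)) ∧
    (∀ f : X → k, IsLocallyConstant f → HasCompactSupport f →
      (∀ x, ∑ i ∈ Finset.range l, f ((⇑γ.symm)^[i] x) = 0) →
      ∃ g : X → k, IsLocallyConstant g ∧ HasCompactSupport g ∧
        ∀ x, f x = g x - g (γ.symm x)) := by
  have hσl : ∀ x, (⇑γ.symm)^[l] x = x := fun x => by
    simpa only [hγl] using LeftInverse.iterate γ.symm_apply_apply l x
  have hσfree : ∀ x, ∀ m, 0 < m → m < l → (⇑γ.symm)^[m] x ≠ x := fun x _ =>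
    iterate_ne_self_of_prime hl (hσl x) fun hx => hfree x (γ.symm_apply_eq.1 hx).symm
  have partition := fun {K : Set X} (hK : IsCompact K) =>
    exists_orbitSum_eq_one k γ.symm.continuous hl.pos hσl hσfree hK
  constructor
  · intro f hf hfc hinv
    obtain ⟨h, hh, hhc, hN⟩ := partition hfc.isCompact
    have hinvσ : ∀ x, f (γ.symm x) = f x := fun x => by rw [← hinv, γ.apply_symm_apply]
    exact ⟨f * h, hf.mul hh, hhc.mul_left, fun x => (congrFun
      (orbitSum_mul_eq_self hinvσ fun x hx => hN x (subset_tsupport f hx)) x).symm⟩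
  · intro f hf hfc hNf
    obtain ⟨h, hh, hhc, hN⟩ := partition hfc.isCompact
    exact ⟨orbitContraction γ.symm l h f, hh.orbitContraction γ.symm.continuous hf,
      hhc.orbitContraction f, fun x => (orbitContraction_sub_apply_self_of_orbitSum_eq_one
        hσl hNf (fun x hx => hN x (subset_tsupport f hx)) x).symm⟩

/-- Let `γ` be a homeomorphism, of order dividing the prime `l`, of a locally compact,
Hausdorff, totally disconnected, second countable space `X`, acting freely
(`γ x ≠ x` for all `x`), and let `k` be a field of characteristic `l`. Then both Tate
cohomology groups of the `γ`-action on `C_c^∞(X, k)` vanish: every `γ`-invariant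
`f ∈ C_c^∞(X, k)` is of the form `N(g) = ∑_{i=0}^{l-1} γ^i · g`, and every
`f ∈ C_c^∞(X, k)` with `N(f) = 0` is of the form `g - γ·g`
(where `(γ · g)(x) = g(γ⁻¹ x)`). -/
theorem tate_cohomology_vanishes_of_free
    (l : ℕ) (hl : l.Prime)
    (X : Type*) [TopologicalSpace X] [LocallyCompactSpace X] [T2Space X]
    [TotallyDisconnectedSpace X] [SecondCountableTopology X]
    (γ : X ≃ₜ X) (hγl : ∀ x, (⇑γ)^[l] x = x)
    (hfree : ∀ x : X, γ x ≠ x)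
    (k : Type*) [Field k] [CharP k l] :
    (∀ f : X → k, IsLocallyConstant f → HasCompactSupport f →
      (∀ x, f (γ x) = f x) →
      ∃ g : X → k, IsLocallyConstant g ∧ HasCompactSupport g ∧
        ∀ x, f x = ∑ i ∈ Finset.range l, g ((⇑γ.symm)^[i] x)) ∧
    (∀ f : X → k, IsLocallyConstant f → HasCompactSupport f →
      (∀ x, ∑ i ∈ Finset.range l, f ((⇑γ.symm)^[i] x) = 0) →
      ∃ g : X → k, IsLocallyConstant g ∧ HasCompactSupport g ∧
        ∀ x, f x = g x - g (γ.symm x)) :=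
  tate_cohomology_vanishes_of_free_general l hl X γ hγl hfree k
end

section
/- Assume k has characteristic l. Let I : C_c^∞(X, k) → k be a k-linear functional that is γ-invariant, i.e., I(γ·f) = I(f) for all f ∈ C_c^∞(X, k). Then I(φ) = 0 for every γ-invariant function φ ∈ C_c^∞(X, k) that vanishes identically on the fixed-point set X^γ. -/
/-! Since `l` is prime and `φ` vanishes on `X^γ`, `γ` moves every point of the compact open
support of `φ` along an orbit of exactly `l` points. Hence that support is covered by finitely many
clopen sets `U` with `U, γU, …, γ^(l-1)U` pairwise disjoint, and for each of them
`φ - N(1_U φ)` is again invariant and vanishes on `U`; peeling these off one at a time writes `φ`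
as a norm `N ψ` with `ψ ∈ C_c^∞(X, k)`. Finally `I (N ψ) = l • I ψ = 0` in characteristic `l`. -/

open Function Set

/-- The space `C_c^∞(X, k)` of locally constant, compactly supported `k`-valued
functions on `X`, as a `k`-submodule of `X → k`. -/
def Ccinf (X : Type*) [TopologicalSpace X] (k : Type*) [Field k] :
    Submodule k (X → k) where
  carrier := {f | IsLocallyConstant f ∧ HasCompactSupport f}
  add_mem' := fun hf hg => ⟨hf.1.comp₂ hg.1 (· + ·), hf.2.add hg.2⟩
  zero_mem' := ⟨IsLocallyConstant.const 0, by
    simp [HasCompactSupport, tsupport, Function.support_zero]⟩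
  smul_mem' := fun c f hf =>
    ⟨hf.1.comp (c • ·), hf.2.mono (Function.support_const_smul_subset c f)⟩

variable {X : Type*} [TopologicalSpace X] {k : Type*} [Field k]

/-- The action of a homeomorphism `γ` on `C_c^∞(X, k)`, given by
`(γ · f)(x) = f (γ⁻¹ x)`, as a `k`-linear endomorphism. -/
def gammaT (γ : X ≃ₜ X) : Ccinf X k →ₗ[k] Ccinf X k where
  toFun f := ⟨fun x => (f : X → k) (γ.symm x),
    f.2.1.comp_continuous γ.symm.continuous,
    f.2.2.comp_isClosedEmbedding γ.symm.isClosedEmbedding⟩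
  map_add' f g := by ext x; rfl
  map_smul' c f := by ext x; rfl

/-- Restriction of functions in `C_c^∞(X, k)` to the (closed) fixed-point set
`X^γ = {x : X // γ x = x}`, as a `k`-linear map to `C_c^∞(X^γ, k)`. -/
def resL (γ : X ≃ₜ X) [T2Space X] :
    Ccinf X k →ₗ[k] Ccinf {x : X // γ x = x} k where
  toFun f := ⟨fun y => (f : X → k) y.1,
    f.2.1.comp_continuous continuous_subtype_val,
    f.2.2.comp_isClosedEmbedding
      ((isClosed_eq γ.continuous continuous_id).isClosedEmbedding_subtypeVal)⟩
  map_add' f g := by ext x; rfl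
  map_smul' c f := by ext x; rfl

/-- The norm operator `N = ∑_{i=0}^{l-1} γ^i` on `C_c^∞(X, k)`. -/
def normOp (γ : X ≃ₜ X) (l : ℕ) : Module.End k (Ccinf X k) :=
  ∑ i ∈ Finset.range l, gammaT γ ^ i

theorem Function.iterate_ne_self_of_lt_prime_s8 {α : Type*} {g : α → α} {l : ℕ} (hl : l.Prime)
    {x : α} (hper : g^[l] x = x) (hx : g x ≠ x) {d : ℕ} (hd : 0 < d) (hdl : d < l) :
    g^[d] x ≠ x := by
  have : Fact l.Prime := ⟨hl⟩
  intro hdx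
  have hmin : minimalPeriod g x = l := minimalPeriod_eq_prime hper hx
  have := IsPeriodicPt.minimalPeriod_le hd hdx
  omega

theorem exists_isClopen_disjoint_preimage [TotallySeparatedSpace X] {g : X → X}
    (hg : Continuous g) {x : X} (hx : g x ≠ x) :
    ∃ V : Set X, IsClopen V ∧ x ∈ V ∧ Disjoint V (g ⁻¹' V) := by
  obtain ⟨A, hA, hxA, hgxA⟩ := exists_isClopen_of_totally_separated hx.symm
  refine ⟨A \ g ⁻¹' A, hA.diff (hA.preimage hg), ⟨hxA, hgxA⟩, ?_⟩
  exact Set.disjoint_left.mpr fun z hz hgz => hz.2 hgz.1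

theorem exists_isClopen_disjoint_preimage_iterate [TotallySeparatedSpace X] {g : X → X}
    (hg : Continuous g) {l : ℕ} {x : X} (hx : ∀ d, 0 < d → d < l → g^[d] x ≠ x) :
    ∃ U : Set X, IsClopen U ∧ x ∈ U ∧ ∀ d, 0 < d → d < l → Disjoint U (g^[d] ⁻¹' U) := by
  have hV : ∀ d ∈ Finset.Ioo 0 l,
      ∃ V : Set X, IsClopen V ∧ x ∈ V ∧ Disjoint V (g^[d] ⁻¹' V) := fun d hd =>
    have ⟨hd0, hdl⟩ := Finset.mem_Ioo.mp hd
    exists_isClopen_disjoint_preimage (hg.iterate d) (hx d hd0 hdl)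
  choose! V hVclopen hxV hVdisj using hV
  refine ⟨⋂ d ∈ Finset.Ioo 0 l, V d, isClopen_biInter_finset hVclopen,
    mem_iInter₂.mpr hxV, fun d hd0 hdl => ?_⟩
  have hd : d ∈ Finset.Ioo 0 l := Finset.mem_Ioo.mpr ⟨hd0, hdl⟩
  exact (hVdisj d hd).mono (biInter_subset_of_mem hd) (preimage_mono (biInter_subset_of_mem hd))

noncomputable def Ccinf.indicator {U : Set X} (hU : IsClopen U) (f : Ccinf X k) : Ccinf X k :=
  ⟨U.indicator f, (LocallyConstant.indicator (⟨f, f.2.1⟩ : LocallyConstant X k) hU).2,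
    f.2.2.mono (by rw [support_indicator]; exact inter_subset_right)⟩

theorem Ccinf.coe_indicator {U : Set X} (hU : IsClopen U) (f : Ccinf X k) :
    (Ccinf.indicator hU f : X → k) = U.indicator f :=
  rfl

variable {γ : X ≃ₜ X} {l : ℕ}

theorem Homeomorph.iterate_symm_apply_eq_self (hγl : ∀ x, γ^[l] x = x) (x : X) :
    γ.symm^[l] x = x := by
  simpa [hγl x] using (LeftInverse.iterate γ.symm_apply_apply l) x

theorem gammaT_pow_apply (n : ℕ) (f : Ccinf X k) (x : X) :
    ((gammaT γ ^ n) f : X → k) x = (f : X → k) (γ.symm^[n] x) := by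
  induction n generalizing f with
  | zero => rfl
  | succ n ih => rw [pow_succ, Module.End.mul_apply, ih, iterate_succ_apply']; rfl

theorem normOp_apply (f : Ccinf X k) (x : X) :
    (normOp γ l f : X → k) x = ∑ i ∈ Finset.range l, (f : X → k) (γ.symm^[i] x) := by
  simp [normOp, gammaT_pow_apply]

theorem apply_symm_iterate_of_gammaT_eq {f : Ccinf X k} (hf : gammaT γ f = f) (n : ℕ) (x : X) :
    (f : X → k) (γ.symm^[n] x) = (f : X → k) x := by
  rw [← gammaT_pow_apply, Module.End.pow_apply, iterate_fixed hf]

theorem gammaT_pow_eq_one (hγl : ∀ x, γ^[l] x = x) :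
    (gammaT γ ^ l : Module.End k (Ccinf X k)) = 1 := by
  ext f x
  rw [gammaT_pow_apply, γ.iterate_symm_apply_eq_self hγl]
  rfl

theorem gammaT_normOp (hγl : ∀ x, γ^[l] x = x) (f : Ccinf X k) :
    gammaT γ (normOp γ l f) = normOp γ l f := by
  have h : (((gammaT γ - 1) * normOp γ l : Module.End k (Ccinf X k)) f) = 0 := by
    have := mul_geom_sum (gammaT γ : Module.End k (Ccinf X k)) l
    rw [gammaT_pow_eq_one hγl, sub_self] at this
    rw [normOp, this, LinearMap.zero_apply]
  rwa [Module.End.mul_apply, LinearMap.sub_apply, Module.End.one_apply, sub_eq_zero] at h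

theorem map_normOp {I : Ccinf X k →ₗ[k] k} (hI : ∀ f, I (gammaT γ f) = I f) (f : Ccinf X k) :
    I (normOp γ l f) = l • I f := by
  have hpow : ∀ i, I ((gammaT γ ^ i) f) = I f := fun i => by
    induction i with
    | zero => rfl
    | succ i ih => rw [pow_succ', Module.End.mul_apply, hI, ih]
  simp [normOp, hpow]

theorem support_sub_normOp_indicator_subset (hl : 0 < l) {U : Set X} (hU : IsClopen U)
    (hUdisj : ∀ d, 0 < d → d < l → Disjoint U (γ.symm^[d] ⁻¹' U))
    {f : Ccinf X k} (hf : gammaT γ f = f) :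
    support ((f - normOp γ l (Ccinf.indicator hU f) : Ccinf X k) : X → k) ⊆
      support (f : X → k) \ U := by
  intro x hx
  rw [mem_support, Submodule.coe_sub, Pi.sub_apply, normOp_apply, sub_ne_zero] at hx
  refine ⟨fun hfx => hx ?_, fun hxU => hx ?_⟩
  · refine hfx.trans (Finset.sum_eq_zero fun i _ => ?_).symm
    rw [Ccinf.coe_indicator, indicator_apply_eq_zero, apply_symm_iterate_of_gammaT_eq hf]
    exact fun _ => hfx
  · rw [Finset.sum_eq_single_of_mem 0 (Finset.mem_range.mpr hl), iterate_zero_apply,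
      Ccinf.coe_indicator, indicator_of_mem hxU]
    intro d hd hd0
    have hdU : γ.symm^[d] x ∉ U :=
      (hUdisj d (Nat.pos_of_ne_zero hd0) (Finset.mem_range.mp hd)).notMem_of_mem_left hxU
    rw [Ccinf.coe_indicator, indicator_of_notMem hdU]

theorem mem_range_normOp_of_support_subset_biUnion (hγl : ∀ x, γ^[l] x = x) (hl : 0 < l)
    {ι : Type*} {U : ι → Set X} (hU : ∀ i, IsClopen (U i))
    (hUdisj : ∀ i d, 0 < d → d < l → Disjoint (U i) (γ.symm^[d] ⁻¹' U i)) (s : Finset ι) :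
    ∀ f : Ccinf X k, gammaT γ f = f → support (f : X → k) ⊆ ⋃ i ∈ s, U i →
      f ∈ LinearMap.range (normOp γ l) := by
  classical
  induction s using Finset.induction_on with
  | empty => intro f _ hsupp; simp_all
  | insert a s _ ih =>
    intro f hf hsupp
    set g := f - normOp γ l (Ccinf.indicator (hU a) f)
    have hg : gammaT γ g = g := by rw [map_sub, hf, gammaT_normOp hγl]
    have hgsupp : support (g : X → k) ⊆ ⋃ i ∈ s, U i := fun x hx => by
      obtain ⟨hfx, hxa⟩ := support_sub_normOp_indicator_subset hl (hU a) (hUdisj a) hf hx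
      simpa [hxa] using hsupp hfx
    rw [← sub_add_cancel f (normOp γ l (Ccinf.indicator (hU a) f))]
    exact add_mem (ih g hg hgsupp) (LinearMap.mem_range_self _ _)

theorem mem_range_normOp [TotallySeparatedSpace X] (hl : l.Prime) (hγl : ∀ x, γ^[l] x = x)
    {φ : Ccinf X k} (hφinv : gammaT γ φ = φ) (hφvan : ∀ x, γ x = x → (φ : X → k) x = 0) :
    φ ∈ LinearMap.range (normOp γ l) := by
  have hK : IsCompact (support (φ : X → k)) :=
    φ.2.2.isCompact.of_isClosed_subset (φ.2.1.isClopen_fiber 0).compl.isClosed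
      (subset_tsupport _)
  have hgood : ∀ x ∈ support (φ : X → k), ∃ U : Set X, IsClopen U ∧ x ∈ U ∧
      ∀ d, 0 < d → d < l → Disjoint U (γ.symm^[d] ⁻¹' U) := by
    intro x hx
    have hmove : γ.symm x ≠ x := fun h => hx (hφvan x (γ.symm_apply_eq.mp h).symm)
    exact exists_isClopen_disjoint_preimage_iterate γ.symm.continuous
      fun d hd hdl => iterate_ne_self_of_lt_prime_s8 hl (γ.iterate_symm_apply_eq_self hγl x) hmove hd hdl
  choose! U hUclopen hxU hUdisj using hgood
  obtain ⟨t, ht⟩ := hK.elim_finite_subcover (fun x : support (φ : X → k) => U x)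
    (fun x => (hUclopen x x.2).isOpen) fun x hx => mem_iUnion.mpr ⟨⟨x, hx⟩, hxU x hx⟩
  exact mem_range_normOp_of_support_subset_biUnion hγl hl.pos
    (fun x : support (φ : X → k) => hUclopen x x.2) (fun x => hUdisj x x.2) t φ hφinv ht

theorem invariant_functional_vanishes_general
    (l : ℕ) (hl : l.Prime)
    (X : Type*) [TopologicalSpace X] [LocallyCompactSpace X] [T2Space X]
    [TotallyDisconnectedSpace X]
    (γ : X ≃ₜ X) (hγl : ∀ x, (⇑γ)^[l] x = x)
    (k : Type*) [Field k] [CharP k l]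
    (I : Ccinf X k →ₗ[k] k) (hI : ∀ f : Ccinf X k, I (gammaT γ f) = I f)
    (φ : Ccinf X k) (hφinv : gammaT γ φ = φ)
    (hφvan : ∀ x : X, γ x = x → (φ : X → k) x = 0) :
    I φ = 0 := by
  have : TotallySeparatedSpace X := loc_compact_t2_tot_disc_iff_tot_sep.mp ‹_›
  obtain ⟨ψ, rfl⟩ := mem_range_normOp hl hγl hφinv hφvan
  rw [map_normOp hI, nsmul_eq_mul, CharP.cast_eq_zero, zero_mul]

/-- Let `γ` be a homeomorphism, of order dividing the prime `l`, of a locally compact,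
Hausdorff, totally disconnected, second countable space `X`, and let `k` be a field of
characteristic `l`. If `I : C_c^∞(X, k) → k` is a `γ`-invariant `k`-linear functional,
then `I(φ) = 0` for every `γ`-invariant `φ ∈ C_c^∞(X, k)` vanishing on the fixed-point
set `X^γ`. -/
theorem invariant_functional_vanishes
    (l : ℕ) (hl : l.Prime)
    (X : Type*) [TopologicalSpace X] [LocallyCompactSpace X] [T2Space X]
    [TotallyDisconnectedSpace X] [SecondCountableTopology X]
    (γ : X ≃ₜ X) (hγl : ∀ x, (⇑γ)^[l] x = x)
    (k : Type*) [Field k] [CharP k l]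
    (I : Ccinf X k →ₗ[k] k) (hI : ∀ f : Ccinf X k, I (gammaT γ f) = I f)
    (φ : Ccinf X k) (hφinv : gammaT γ φ = φ)
    (hφvan : ∀ x : X, γ x = x → (φ : X → k) x = 0) :
    I φ = 0 :=
  invariant_functional_vanishes_general l hl X γ hγl k I hI φ hφinv hφvan
end
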